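/- Let p ∈ (1,2) and 0 < a₁ < a₂. For i = 1,2, let ψᵢ : [0,1) → [0,∞) be a continuously differentiable function with ψᵢ(0) = 0 satisfying ψᵢ'(y) + (p/(p-1)) ψᵢ(y)^{(p-1)/p} = (p aᵢ^{2-p}/(p-1))(1-y) for all y ∈ (0,1). Then there exists a constant K(p) > 0 depending only on p such that, for all y ∈ [0,1): ψ₁(y) ≤ ψ₂(y) ≤ ψ₁(y) + K(p)(a₂-a₁)^{2-p} and |ψ₁'(y) - ψ₂'(y)| ≤ K(p)[(a₂-a₁)^{(2-p)(p-1)/p} + (a₂-a₁)^{2-p}]. -/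

import Mathlib

/-!
Write `C = p/(p-1)`, `α = (p-1)/p`, so that each equation reads `ψ' = C (a^{2-p} (1-y) - ψ^α)`.
Where `ψ₁ = ψ₂` the difference `ψ₂' - ψ₁' = C (a₂^{2-p} - a₁^{2-p}) (1-y)` is positive, so the
comparison principle keeps `ψ₁ ≤ ψ₂`. Given that, `ψ₂' - ψ₁' ≤ C (a₂^{2-p} - a₁^{2-p})`, which
integrates to the upper bound, and the derivative bound follows from the subadditivity of
`t ↦ t^α` and of `t ↦ t^{2-p}`.
-/

open Set Filter Topology

/-- `ψ : [0,1) → [0,∞)` is continuously differentiable (with derivative `ψd`), `ψ(0) = 0`,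
and `ψ' + (p/(p-1)) ψ^{(p-1)/p} = (p a^{2-p}/(p-1))(1-y)` holds on `(0,1)`. -/
def PsiSol (p a : ℝ) (ψ ψd : ℝ → ℝ) : Prop :=
  (∀ y ∈ Set.Ico (0:ℝ) 1, HasDerivWithinAt ψ (ψd y) (Set.Ico 0 1) y) ∧
  ContinuousOn ψd (Set.Ico 0 1) ∧
  (∀ y ∈ Set.Ico (0:ℝ) 1, 0 ≤ ψ y) ∧
  ψ 0 = 0 ∧
  (∀ y ∈ Set.Ioo (0:ℝ) 1,
    ψd y + (p/(p-1)) * ψ y ^ ((p-1)/p) = (p * a ^ (2-p) / (p-1)) * (1-y))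

lemma Real.rpow_sub_rpow_le_sub_rpow {s x y : ℝ} (hx : 0 ≤ x) (hxy : x ≤ y) (hs₀ : 0 ≤ s)
    (hs₁ : s ≤ 1) : y ^ s - x ^ s ≤ (y - x) ^ s := by
  have := Real.rpow_add_le_add_rpow hx (sub_nonneg.2 hxy) hs₀ hs₁
  rw [add_sub_cancel] at this
  linarith

namespace PsiSol

variable {p a a₁ a₂ y : ℝ} {ψ ψd ψ₁ ψd₁ ψ₂ ψd₂ : ℝ → ℝ}

lemma continuousOn (h : PsiSol p a ψ ψd) : ContinuousOn ψ (Ico 0 1) :=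
  fun y hy => (h.1 y hy).continuousWithinAt

lemma hasDerivWithinAt_Ici (h : PsiSol p a ψ ψd) (hy : y ∈ Ico (0 : ℝ) 1) :
    HasDerivWithinAt ψ (ψd y) (Ici y) y :=
  (h.1 y hy).mono_of_mem_nhdsWithin
    (Filter.mem_of_superset (Ico_mem_nhdsGE hy.2) (Ico_subset_Ico_left hy.1))

/-- By continuity the equation also holds at `y = 0`. -/
lemma deriv_eq (hp : 1 < p) (h : PsiSol p a ψ ψd) (hy : y ∈ Ico (0 : ℝ) 1) :
    ψd y = p / (p - 1) * (a ^ (2 - p) * (1 - y) - ψ y ^ ((p - 1) / p)) := by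
  have hα : 0 ≤ (p - 1) / p := div_nonneg (by linarith) (by linarith)
  have heq : EqOn (fun y => ψd y + p / (p - 1) * ψ y ^ ((p - 1) / p))
      (fun y => p * a ^ (2 - p) / (p - 1) * (1 - y)) (Ico 0 1) := by
    refine EqOn.of_subset_closure h.2.2.2.2 ?_ (by fun_prop) Ioo_subset_Ico_self ?_
    · exact h.2.1.add (continuousOn_const.mul (h.continuousOn.rpow_const fun _ _ => Or.inr hα))
    · rw [closure_Ioo zero_ne_one]
      exact Ico_subset_Icc_self
  linear_combination heq hy

theorem le_of_rpow_lt (hp : 1 < p) (ha : a₁ ^ (2 - p) < a₂ ^ (2 - p))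
    (h₁ : PsiSol p a₁ ψ₁ ψd₁) (h₂ : PsiSol p a₂ ψ₂ ψd₂) (hy : y ∈ Ico (0 : ℝ) 1) :
    ψ₁ y ≤ ψ₂ y := by
  have hsub : Icc 0 y ⊆ Ico (0 : ℝ) 1 := Icc_subset_Ico_right hy.2
  have hsub' : Ico 0 y ⊆ Ico (0 : ℝ) 1 := Ico_subset_Icc_self.trans hsub
  refine image_le_of_deriv_right_lt_deriv_boundary' (h₁.continuousOn.mono hsub)
    (fun x hx => h₁.hasDerivWithinAt_Ici (hsub' hx)) (by rw [h₁.2.2.2.1, h₂.2.2.2.1])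
    (h₂.continuousOn.mono hsub) (fun x hx => h₂.hasDerivWithinAt_Ici (hsub' hx)) ?_
    ⟨hy.1, le_rfl⟩
  intro x hx hψ
  rw [h₁.deriv_eq hp (hsub' hx), h₂.deriv_eq hp (hsub' hx), hψ]
  have : 0 < 1 - x := by linarith [hx.2, hy.2]
  have : 0 < p / (p - 1) := div_pos (by linarith) (by linarith)
  gcongr

theorem sub_le (hp : 1 < p) (ha : a₁ ^ (2 - p) < a₂ ^ (2 - p))
    (h₁ : PsiSol p a₁ ψ₁ ψd₁) (h₂ : PsiSol p a₂ ψ₂ ψd₂) (hy : y ∈ Ico (0 : ℝ) 1) :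
    ψ₂ y - ψ₁ y ≤ p / (p - 1) * (a₂ ^ (2 - p) - a₁ ^ (2 - p)) := by
  set C := p / (p - 1)
  set Δ := a₂ ^ (2 - p) - a₁ ^ (2 - p)
  have hCΔ : 0 ≤ C * Δ := mul_nonneg (div_pos (by linarith) (by linarith)).le (by linarith)
  have hsub : Icc 0 y ⊆ Ico (0 : ℝ) 1 := Icc_subset_Ico_right hy.2
  have hsub' : Ico 0 y ⊆ Ico (0 : ℝ) 1 := Ico_subset_Icc_self.trans hsub
  have hlinear := image_le_of_deriv_right_le_deriv_boundary (B := fun x => x * (C * Δ))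
    ((h₂.continuousOn.sub h₁.continuousOn).mono hsub)
    (fun x hx => (h₂.hasDerivWithinAt_Ici (hsub' hx)).sub (h₁.hasDerivWithinAt_Ici (hsub' hx)))
    (by simp [h₁.2.2.2.1, h₂.2.2.2.1]) (by fun_prop)
    (fun x _ => (hasDerivAt_mul_const (C * Δ)).hasDerivWithinAt) ?_ ⟨hy.1, le_rfl⟩
  · rw [Pi.sub_apply] at hlinear
    nlinarith [hy.2]
  intro x hx
  have hx' := hsub' hx
  have hψ : ψ₁ x ^ ((p - 1) / p) ≤ ψ₂ x ^ ((p - 1) / p) :=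
    Real.rpow_le_rpow (h₁.2.2.1 x hx') (le_of_rpow_lt hp ha h₁ h₂ hx')
      (div_nonneg (by linarith) (by linarith))
  rw [h₁.deriv_eq hp hx', h₂.deriv_eq hp hx']
  have hC : 0 ≤ C := (div_pos (by linarith) (by linarith)).le
  nlinarith [mul_le_mul_of_nonneg_left hψ hC, mul_nonneg hCΔ hx.1]

theorem abs_deriv_sub_le (hp : 1 < p) (ha : a₁ ^ (2 - p) < a₂ ^ (2 - p))
    (h₁ : PsiSol p a₁ ψ₁ ψd₁) (h₂ : PsiSol p a₂ ψ₂ ψd₂) (hy : y ∈ Ico (0 : ℝ) 1) :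
    |ψd₁ y - ψd₂ y| ≤ p / (p - 1) * (a₂ ^ (2 - p) - a₁ ^ (2 - p))
      + p / (p - 1) * (p / (p - 1) * (a₂ ^ (2 - p) - a₁ ^ (2 - p))) ^ ((p - 1) / p) := by
  set C := p / (p - 1)
  set Δ := a₂ ^ (2 - p) - a₁ ^ (2 - p)
  set α := (p - 1) / p
  have hC : 0 < C := div_pos (by linarith) (by linarith)
  have hα₀ : 0 ≤ α := div_nonneg (by linarith) (by linarith)
  have hα₁ : α ≤ 1 := (div_le_one (by linarith)).2 (by linarith)
  have hle := le_of_rpow_lt hp ha h₁ h₂ hy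
  have hgap : ψ₂ y ^ α - ψ₁ y ^ α ≤ (C * Δ) ^ α :=
    (Real.rpow_sub_rpow_le_sub_rpow (h₁.2.2.1 y hy) hle hα₀ hα₁).trans
      (Real.rpow_le_rpow (sub_nonneg.2 hle) (sub_le hp ha h₁ h₂ hy) hα₀)
  have hmono : ψ₁ y ^ α ≤ ψ₂ y ^ α := Real.rpow_le_rpow (h₁.2.2.1 y hy) hle hα₀
  have hy' : 0 ≤ 1 - y ∧ 1 - y ≤ 1 := ⟨by linarith [hy.2], by linarith [hy.1]⟩
  rw [h₁.deriv_eq hp hy, h₂.deriv_eq hp hy, abs_le]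
  constructor <;>
    nlinarith [mul_le_mul_of_nonneg_left hgap hC.le, mul_le_mul_of_nonneg_left hmono hC.le,
      mul_nonneg (mul_nonneg hC.le (sub_nonneg.2 ha.le)) hy'.1,
      mul_le_mul_of_nonneg_left hy'.2 (mul_nonneg hC.le (sub_nonneg.2 ha.le))]

end PsiSol

/-- **Monotonicity and continuous dependence w.r.t. `a`.** There is a
constant `K(p) > 0`, depending only on `p`, such that for all `0 < a₁ < a₂` and all
solutions `ψ₁, ψ₂` of the corresponding initial value problems:
`ψ₁ ≤ ψ₂ ≤ ψ₁ + K(p)(a₂-a₁)^{2-p}` and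
`|ψ₁' - ψ₂'| ≤ K(p)[(a₂-a₁)^{(2-p)(p-1)/p} + (a₂-a₁)^{2-p}]` on `[0,1)`. -/
theorem stmt5 (p : ℝ) (hp : p ∈ Set.Ioo (1:ℝ) 2) :
    ∃ K : ℝ, 0 < K ∧
      ∀ a₁ a₂ : ℝ, 0 < a₁ → a₁ < a₂ →
        ∀ ψ₁ ψd₁ ψ₂ ψd₂ : ℝ → ℝ, PsiSol p a₁ ψ₁ ψd₁ → PsiSol p a₂ ψ₂ ψd₂ →
          ∀ y ∈ Set.Ico (0:ℝ) 1,
            ψ₁ y ≤ ψ₂ y ∧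
            ψ₂ y ≤ ψ₁ y + K * (a₂ - a₁) ^ (2-p) ∧
            |ψd₁ y - ψd₂ y| ≤
              K * ((a₂ - a₁) ^ ((2-p)*(p-1)/p) + (a₂ - a₁) ^ (2-p)) := by
  obtain ⟨hp₁, hp₂⟩ := hp
  set C := p / (p - 1)
  set α := (p - 1) / p
  have hC : 0 < C := div_pos (by linarith) (by linarith)
  have hα : 0 ≤ α := div_nonneg (by linarith) (by linarith)
  refine ⟨C * (1 + C ^ α), by positivity, fun a₁ a₂ ha₁ ha ψ₁ ψd₁ ψ₂ ψd₂ h₁ h₂ y hy => ?_⟩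
  have hd : 0 ≤ a₂ - a₁ := by linarith
  have hΔ : a₁ ^ (2 - p) < a₂ ^ (2 - p) := Real.rpow_lt_rpow ha₁.le ha (by linarith)
  have hΔd : C * (a₂ ^ (2 - p) - a₁ ^ (2 - p)) ≤ C * (a₂ - a₁) ^ (2 - p) :=
    mul_le_mul_of_nonneg_left
      (Real.rpow_sub_rpow_le_sub_rpow ha₁.le ha.le (by linarith) (by linarith)) hC.le
  have hΔdα : (C * (a₂ ^ (2 - p) - a₁ ^ (2 - p))) ^ α
      ≤ C ^ α * (a₂ - a₁) ^ ((2 - p) * (p - 1) / p) := by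
    rw [mul_div_assoc, Real.rpow_mul hd, ← Real.mul_rpow hC.le (by positivity)]
    exact Real.rpow_le_rpow (mul_nonneg hC.le (sub_nonneg.2 hΔ.le)) hΔd hα
  have hsub := PsiSol.sub_le hp₁ hΔ h₁ h₂ hy
  have habs := PsiSol.abs_deriv_sub_le hp₁ hΔ h₁ h₂ hy
  have hd₁ : 0 ≤ (a₂ - a₁) ^ (2 - p) := by positivity
  have hd₂ : 0 ≤ (a₂ - a₁) ^ ((2 - p) * (p - 1) / p) := by positivity
  have hCα : 0 ≤ C ^ α := by positivity
  refine ⟨PsiSol.le_of_rpow_lt hp₁ hΔ h₁ h₂ hy, ?_, ?_⟩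
  · nlinarith [mul_nonneg (mul_nonneg hC.le hCα) hd₁]
  · nlinarith [mul_le_mul_of_nonneg_left hΔdα hC.le, mul_nonneg hC.le hd₂,
      mul_nonneg (mul_nonneg hC.le hCα) hd₁]
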